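/- Let G be a connected weighted graph on a finite vertex set V with Laplacian L, let T be a nonempty proper subset of V with complement S = V ∖ T, and assume L_{SS} is positive definite, so that SC(L,T) is defined. Let Z be a Moore–Penrose pseudoinverse of L, let I be the T × T identity matrix, and let J be the T × T all-ones matrix. Then the matrix (I − |T|^{-1} J) · Z_{[T,T]} · (I − |T|^{-1} J) is a Moore–Penrose pseudoinverse of SC(L,T), where Z_{[T,T]} denotes the T × T principal submatrix of Z. -/

import Mathlib

open Matrix

variable {V : Type*}

/-- The Laplacian of a weighted graph. -/
noncomputable def lap [Fintype V] [DecidableEq V] (w : V → V → ℝ) : Matrix V V ℝ :=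
  Matrix.of fun u v => if u = v then ∑ z, w u z else - w u v

/-- The block of a matrix with rows selected by `P` and columns selected by `Q`. -/
def blk (M : Matrix V V ℝ) (P Q : V → Prop) : Matrix {v // P v} {v // Q v} ℝ :=
  Matrix.of fun a b => M a.1 b.1

/-- The Schur complement of `M` onto `T`. -/
noncomputable def SC [Fintype V] [DecidableEq V] (M : Matrix V V ℝ) (T : Set V)
    [DecidablePred (· ∈ T)] : Matrix {v // v ∈ T} {v // v ∈ T} ℝ :=
  blk M (· ∈ T) (· ∈ T) -
    blk M (· ∈ T) (fun v => v ∉ T) * (blk M (fun v => v ∉ T) (fun v => v ∉ T))⁻¹ *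
      blk M (fun v => v ∉ T) (· ∈ T)

/-!
Write `A = SC(L, T)`. The LDU factorisation of `L` with respect to `V = T ⊔ S` has unitriangular
outer factors and middle factor `diag(A, L_SS)`; cancelling the outer factors in `L Z L = L`
shows `A Z_TT A = A`. The same elimination identifies `ker A` with the restriction of
`ker L` to `T`, which for a connected graph is the constants. For a symmetric `A` whose kernel
is the constants, every generalized inverse `X` yields the Moore–Penrose inverse `C X C`, where
`C = I - |T|⁻¹ J` is the orthogonal projection onto `range A`: `C X A = C` because
`X A x - x ∈ ker A`, by transposition `A X C = C`, so `A (C X C) = (C X C) A = C`.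
-/

namespace Matrix

variable {m n α : Type*} [Fintype m] [Fintype n] [DecidableEq n] [CommRing α]

theorem schur_mul_toBlocks₁₁_mul_schur [DecidableEq m] (A : Matrix m m α) (B : Matrix m n α)
    (C : Matrix n m α) (D : Matrix n n α) [Invertible D] {X : Matrix (m ⊕ n) (m ⊕ n) α}
    (hX : fromBlocks A B C D * X * fromBlocks A B C D = fromBlocks A B C D) :
    (A - B * ⅟D * C) * X.toBlocks₁₁ * (A - B * ⅟D * C) = A - B * ⅟D * C := by
  rw [fromBlocks_eq_of_invertible₂₂] at hX
  set U : Matrix (m ⊕ n) (m ⊕ n) α := fromBlocks 1 (B * ⅟D) 0 1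
  set L : Matrix (m ⊕ n) (m ⊕ n) α := fromBlocks 1 0 (⅟D * C) 1
  set Δ := fromBlocks (A - B * ⅟D * C) 0 0 D
  have hU : IsUnit U := by simp [U, isUnit_iff_isUnit_det]
  have hL : IsUnit L := by simp [L, isUnit_iff_isUnit_det]
  -- cancel the unitriangular factors; the top-left block of `L * X * U` is `X.toBlocks₁₁`
  have hΔ : Δ * (L * X * U) * Δ = Δ := by
    refine hU.mul_left_cancel (hL.mul_right_cancel ?_)
    simpa only [Matrix.mul_assoc] using hX
  rw [← fromBlocks_toBlocks X] at hΔ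
  simpa [Δ, L, U, fromBlocks_multiply] using congrArg toBlocks₁₁ hΔ

theorem fromBlocks_mulVec_sumElim_eq_zero_iff (A : Matrix m m α) (B : Matrix m n α)
    (C : Matrix n m α) (D : Matrix n n α) [Invertible D] (x : m → α) (y : n → α) :
    fromBlocks A B C D *ᵥ Sum.elim x y = 0 ↔
      (A - B * ⅟D * C) *ᵥ x = 0 ∧ y = -((⅟D * C) *ᵥ x) := by
  have hy : C *ᵥ x + D *ᵥ y = 0 ↔ y = -((⅟D * C) *ᵥ x) := by
    constructor
    · intro h
      calc y = ⅟D *ᵥ (D *ᵥ y) := by rw [mulVec_mulVec, invOf_mul_self, one_mulVec]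
        _ = ⅟D *ᵥ -(C *ᵥ x) := by rw [eq_neg_of_add_eq_zero_right h]
        _ = -((⅟D * C) *ᵥ x) := by rw [mulVec_neg, mulVec_mulVec]
    · rintro rfl
      rw [mulVec_neg, mulVec_mulVec, ← Matrix.mul_assoc, mul_invOf_self, Matrix.one_mul,
        add_neg_cancel]
  rw [fromBlocks_mulVec, ← Sum.elim_zero_zero, Sum.elim_eq_iff, Sum.elim_comp_inl,
    Sum.elim_comp_inr, hy]
  refine and_congr_left fun hyx => ?_
  rw [hyx, sub_mulVec, mulVec_neg, mulVec_mulVec, Matrix.mul_assoc, ← sub_eq_add_neg]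

end Matrix

section SchurComplement

variable (T : Set V) [DecidablePred (· ∈ T)]

lemma submatrix_sumCompl_eq_fromBlocks (M : Matrix V V ℝ) :
    M.submatrix (Equiv.sumCompl (· ∈ T)) (Equiv.sumCompl (· ∈ T)) =
      fromBlocks (blk M (· ∈ T) (· ∈ T)) (blk M (· ∈ T) (· ∉ T))
        (blk M (· ∉ T) (· ∈ T)) (blk M (· ∉ T) (· ∉ T)) := by
  ext (a | a) (b | b) <;> rfl

variable [Fintype V]

lemma mulVec_eq_zero_iff_fromBlocks (M : Matrix V V ℝ) (y : V → ℝ) :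
    M *ᵥ y = 0 ↔ fromBlocks (blk M (· ∈ T) (· ∈ T)) (blk M (· ∈ T) (· ∉ T))
        (blk M (· ∉ T) (· ∈ T)) (blk M (· ∉ T) (· ∉ T)) *ᵥ (y ∘ Equiv.sumCompl (· ∈ T)) = 0 := by
  rw [← submatrix_sumCompl_eq_fromBlocks, submatrix_mulVec_equiv, Function.comp_assoc,
    Equiv.self_comp_symm, Function.comp_id,
    ← (Equiv.sumCompl (· ∈ T)).surjective.injective_comp_right.eq_iff]
  rfl

variable [DecidableEq V]

lemma SC_transpose {M : Matrix V V ℝ} (hM : Mᵀ = M) : (SC M T)ᵀ = SC M T := by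
  have hblk : ∀ P Q : V → Prop, (blk M P Q)ᵀ = blk M Q P := fun P Q => by
    ext a b; exact congrFun (congrFun hM a.1) b.1
  simp only [SC, transpose_sub, transpose_mul, transpose_nonsing_inv, hblk, Matrix.mul_assoc]

variable {T}

lemma SC_mul_blk_mul_SC {M Z : Matrix V V ℝ} (hD : IsUnit (blk M (· ∉ T) (· ∉ T)).det)
    (hZ : M * Z * M = M) : SC M T * blk Z (· ∈ T) (· ∈ T) * SC M T = SC M T := by
  have := invertibleOfIsUnitDet _ hD
  set e := Equiv.sumCompl (· ∈ T)
  have hZ' : M.submatrix e e * Z.submatrix e e * M.submatrix e e = M.submatrix e e := by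
    rw [submatrix_mul_equiv, submatrix_mul_equiv, hZ]
  rw [submatrix_sumCompl_eq_fromBlocks] at hZ'
  have h := schur_mul_toBlocks₁₁_mul_schur _ _ _ _ hZ'
  rw [invOf_eq_nonsing_inv] at h
  exact h

lemma SC_mulVec_restrict_eq_zero {M : Matrix V V ℝ} (hD : IsUnit (blk M (· ∉ T) (· ∉ T)).det)
    {y : V → ℝ} (hy : M *ᵥ y = 0) : SC M T *ᵥ (fun a => y a) = 0 := by
  have := invertibleOfIsUnitDet _ hD
  have hsplit : y ∘ Equiv.sumCompl (· ∈ T) =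
      Sum.elim (fun a : {v // v ∈ T} => y a) (fun a : {v // v ∉ T} => y a) := by
    ext (a | a) <;> rfl
  rw [mulVec_eq_zero_iff_fromBlocks T, hsplit, fromBlocks_mulVec_sumElim_eq_zero_iff,
    invOf_eq_nonsing_inv] at hy
  exact hy.1

lemma exists_restrict_eq_of_SC_mulVec_eq_zero {M : Matrix V V ℝ}
    (hD : IsUnit (blk M (· ∉ T) (· ∉ T)).det) {x : {v // v ∈ T} → ℝ} (hx : SC M T *ᵥ x = 0) :
    ∃ y : V → ℝ, M *ᵥ y = 0 ∧ ∀ a : {v // v ∈ T}, y a = x a := by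
  have := invertibleOfIsUnitDet _ hD
  set e := Equiv.sumCompl (· ∈ T)
  set y := Sum.elim x (-((⅟(blk M (· ∉ T) (· ∉ T)) * blk M (· ∉ T) (· ∈ T)) *ᵥ x)) ∘ e.symm
  have hy : y ∘ e = Sum.elim x (-((⅟(blk M (· ∉ T) (· ∉ T)) * blk M (· ∉ T) (· ∈ T)) *ᵥ x)) := by
    simp [y, Function.comp_assoc]
  refine ⟨y, ?_, fun a => congrFun hy (Sum.inl a)⟩
  rw [mulVec_eq_zero_iff_fromBlocks T, hy, fromBlocks_mulVec_sumElim_eq_zero_iff,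
    invOf_eq_nonsing_inv]
  exact ⟨hx, rfl⟩

end SchurComplement

section Laplacian

variable [Fintype V] [DecidableEq V] {w : V → V → ℝ}

lemma lap_transpose (hw_symm : ∀ u v, w u v = w v u) : (lap w)ᵀ = lap w := by
  ext u v
  rcases eq_or_ne u v with rfl | h
  · rfl
  · simp [lap, h, h.symm, hw_symm u v]

lemma lap_eq_diagonal_sub (hw_diag : ∀ u, w u u = 0) :
    lap w = diagonal (fun u => ∑ v, w u v) - of w := by
  ext u v
  rcases eq_or_ne u v with rfl | h
  · simp [lap, hw_diag]
  · simp [lap, h]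

lemma lap_mulVec_apply (hw_diag : ∀ u, w u u = 0) (g : V → ℝ) (u : V) :
    (lap w *ᵥ g) u = ∑ v, w u v * (g u - g v) := by
  rw [lap_eq_diagonal_sub hw_diag, sub_mulVec, Pi.sub_apply, mulVec_diagonal, Finset.sum_mul]
  simp only [mulVec, dotProduct, of_apply, mul_sub, Finset.sum_sub_distrib]

lemma lap_mulVec_const (hw_diag : ∀ u, w u u = 0) (c : ℝ) : lap w *ᵥ (fun _ => c) = 0 := by
  ext u
  simp [lap_mulVec_apply hw_diag]

lemma dotProduct_lap_mulVec (hw_symm : ∀ u v, w u v = w v u) (hw_diag : ∀ u, w u u = 0)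
    (g : V → ℝ) : g ⬝ᵥ (lap w *ᵥ g) = (∑ u, ∑ v, w u v * (g u - g v) ^ 2) / 2 := by
  have hform : g ⬝ᵥ (lap w *ᵥ g) = ∑ u, ∑ v, w u v * (g u * (g u - g v)) := by
    simp only [dotProduct, lap_mulVec_apply hw_diag, Finset.mul_sum]
    exact Finset.sum_congr rfl fun u _ => Finset.sum_congr rfl fun v _ => by ring
  have hswap : ∑ u, ∑ v, w u v * (g u * (g u - g v)) =
      ∑ u, ∑ v, w u v * (g v * (g v - g u)) := by
    rw [Finset.sum_comm]
    exact Finset.sum_congr rfl fun u _ => Finset.sum_congr rfl fun v _ => by rw [hw_symm]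
  have hsplit : ∑ u, ∑ v, w u v * (g u - g v) ^ 2 =
      ∑ u, ∑ v, w u v * (g u * (g u - g v)) + ∑ u, ∑ v, w u v * (g v * (g v - g u)) := by
    rw [← Finset.sum_add_distrib]
    exact Finset.sum_congr rfl fun u _ => by
      rw [← Finset.sum_add_distrib]
      exact Finset.sum_congr rfl fun v _ => by ring
  linarith

lemma eq_of_lap_mulVec_eq_zero (hw_symm : ∀ u v, w u v = w v u) (hw_nonneg : ∀ u v, 0 ≤ w u v)
    (hw_diag : ∀ u, w u u = 0) (hconn : (SimpleGraph.fromRel fun u v => 0 < w u v).Connected)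
    {g : V → ℝ} (hg : lap w *ᵥ g = 0) (u v : V) : g u = g v := by
  have hnonneg : ∀ u v, 0 ≤ w u v * (g u - g v) ^ 2 := fun u v =>
    mul_nonneg (hw_nonneg u v) (sq_nonneg _)
  have hsum : ∑ u, ∑ v, w u v * (g u - g v) ^ 2 = 0 := by
    linarith [dotProduct_lap_mulVec hw_symm hw_diag g, dotProduct_zero g ▸ congrArg (g ⬝ᵥ ·) hg]
  have hterm : ∀ u v, w u v * (g u - g v) ^ 2 = 0 := fun u v => by
    rw [Fintype.sum_eq_zero_iff_of_nonneg fun u => Fintype.sum_nonneg (hnonneg u)] at hsum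
    exact congrFun ((Fintype.sum_eq_zero_iff_of_nonneg (hnonneg u)).mp (congrFun hsum u)) v
  have hedge : ∀ u v, 0 < w u v → g u = g v := fun u v huv => by
    simpa [huv.ne', sub_eq_zero] using hterm u v
  obtain ⟨p⟩ := hconn.preconnected u v
  induction p with
  | nil => rfl
  | cons hadj _ ih =>
    obtain ⟨-, h | h⟩ := (SimpleGraph.fromRel_adj _ _ _).mp hadj
    exacts [(hedge _ _ h).trans ih, (hedge _ _ h).symm.trans ih]

lemma eq_of_SC_lap_mulVec_eq_zero (hw_symm : ∀ u v, w u v = w v u)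
    (hw_nonneg : ∀ u v, 0 ≤ w u v) (hw_diag : ∀ u, w u u = 0)
    (hconn : (SimpleGraph.fromRel fun u v => 0 < w u v).Connected) {T : Set V}
    [DecidablePred (· ∈ T)] (hD : IsUnit (blk (lap w) (· ∉ T) (· ∉ T)).det)
    {x : {v // v ∈ T} → ℝ} (hx : SC (lap w) T *ᵥ x = 0) (a b : {v // v ∈ T}) : x a = x b := by
  obtain ⟨y, hy, hyx⟩ := exists_restrict_eq_of_SC_mulVec_eq_zero hD hx
  rw [← hyx a, ← hyx b]
  exact eq_of_lap_mulVec_eq_zero hw_symm hw_nonneg hw_diag hconn hy a b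

end Laplacian

def Matrix.IsMoorePenroseInverse {m n α : Type*} [Fintype m] [Fintype n] [Semiring α]
    (A : Matrix m n α) (X : Matrix n m α) : Prop :=
  A * X * A = A ∧ X * A * X = X ∧ (A * X)ᵀ = A * X ∧ (X * A)ᵀ = X * A

noncomputable def centeringMatrix (n : Type*) [Fintype n] [DecidableEq n] : Matrix n n ℝ :=
  1 - (Fintype.card n : ℝ)⁻¹ • of fun _ _ => 1

section Centering

variable {n : Type*} [Fintype n] [DecidableEq n]

lemma centeringMatrix_transpose : (centeringMatrix n)ᵀ = centeringMatrix n := by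
  rw [centeringMatrix, transpose_sub, transpose_one, transpose_smul]
  rfl

lemma centeringMatrix_mulVec_const (c : ℝ) : centeringMatrix n *ᵥ (fun _ => c) = 0 := by
  have hJ : (of fun _ _ => (1 : ℝ) : Matrix n n ℝ) *ᵥ (fun _ => c) =
      fun _ => (Fintype.card n : ℝ) * c := by
    ext
    simp [mulVec, dotProduct]
  rw [centeringMatrix, sub_mulVec, Matrix.smul_mulVec, one_mulVec, hJ]
  ext i
  have : Nonempty n := ⟨i⟩
  have hcard : (Fintype.card n : ℝ) ≠ 0 := Nat.cast_ne_zero.mpr Fintype.card_ne_zero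
  simp [hcard]

lemma mul_centeringMatrix {m : Type*} {A : Matrix m n ℝ} (hA : A *ᵥ (fun _ => 1) = 0) :
    A * centeringMatrix n = A := by
  have hJ : A * (of fun _ _ => 1 : Matrix n n ℝ) = 0 := by
    ext i j
    simpa [mul_apply, mulVec, dotProduct] using congrFun hA i
  rw [centeringMatrix, Matrix.mul_sub, Matrix.mul_one, Matrix.mul_smul, hJ, smul_zero, sub_zero]

lemma centeringMatrix_mul_self : centeringMatrix n * centeringMatrix n = centeringMatrix n :=
  mul_centeringMatrix (centeringMatrix_mulVec_const 1)

lemma centeringMatrix_mul_mul_eq {A X : Matrix n n ℝ}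
    (hker : ∀ x, A *ᵥ x = 0 → ∀ i j, x i = x j) (hX : A * X * A = A) :
    centeringMatrix n * X * A = centeringMatrix n := by
  refine ext_of_mulVec_single fun i => ?_
  set x : n → ℝ := Pi.single i 1
  set d := X *ᵥ (A *ᵥ x) - x
  have hd : A *ᵥ d = 0 := by
    rw [mulVec_sub, mulVec_mulVec, mulVec_mulVec, hX, sub_self]
  have hconst : d = fun _ => d i := funext fun j => hker d hd j i
  have hCd := centeringMatrix_mulVec_const (n := n) (d i)
  rw [← hconst, mulVec_sub, sub_eq_zero] at hCd
  rw [← mulVec_mulVec, ← mulVec_mulVec, hCd]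

theorem isMoorePenroseInverse_centeringMatrix_mul_mul {A X : Matrix n n ℝ} (hA : Aᵀ = A)
    (hA1 : A *ᵥ (fun _ => 1) = 0) (hker : ∀ x, A *ᵥ x = 0 → ∀ i j, x i = x j)
    (hX : A * X * A = A) :
    A.IsMoorePenroseInverse (centeringMatrix n * X * centeringMatrix n) := by
  set C := centeringMatrix n
  have hCt : Cᵀ = C := centeringMatrix_transpose
  have hCC : C * C = C := centeringMatrix_mul_self
  have hCXA : ∀ Y, A * Y * A = A → C * Y * A = C := fun _ => centeringMatrix_mul_mul_eq hker
  have hAC : A * C = A := mul_centeringMatrix hA1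
  have hCA : C * A = A := by
    rw [← hA, ← hCt, ← transpose_mul, hAC]
  have hNA : C * X * C * A = C := by
    rw [Matrix.mul_assoc, hCA, hCXA X hX]
  -- `Xᵀ` is a generalized inverse of `A` too; transposing `C * Xᵀ * A = C` gives `A * X * C = C`
  have hAN : A * (C * X * C) = C := by
    have hXt : A * Xᵀ * A = A := by
      simpa only [transpose_mul, hA, Matrix.mul_assoc] using congrArg transpose hX
    calc A * (C * X * C) = A * X * C := by rw [← Matrix.mul_assoc, ← Matrix.mul_assoc, hAC]
      _ = (C * Xᵀ * A)ᵀ := by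
        simp only [transpose_mul, transpose_transpose, hA, hCt, Matrix.mul_assoc]
      _ = C := by rw [hCXA Xᵀ hXt, hCt]
  refine ⟨?_, ?_, ?_, ?_⟩
  · rw [hAN, hCA]
  · rw [hNA, ← Matrix.mul_assoc, ← Matrix.mul_assoc, hCC]
  · rw [hAN, hCt]
  · rw [hNA, hCt]

end Centering

theorem schur_complement_pseudoinverse_formula_general [Fintype V] [DecidableEq V]
    (w : V → V → ℝ) (hw_symm : ∀ u v, w u v = w v u) (hw_nonneg : ∀ u v, 0 ≤ w u v)
    (hw_diag : ∀ u, w u u = 0)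
    (hconn : (SimpleGraph.fromRel fun u v => 0 < w u v).Connected)
    (T : Set V) [DecidablePred (· ∈ T)]
    (hSS : (blk (lap w) (fun v => v ∉ T) (fun v => v ∉ T)).PosDef)
    (Z : Matrix V V ℝ)
    (hZ1 : lap w * Z * lap w = lap w)
    (P N : Matrix {v // v ∈ T} {v // v ∈ T} ℝ)
    (hP : P = 1 - ((Fintype.card {v // v ∈ T} : ℝ))⁻¹ • Matrix.of fun _ _ => (1 : ℝ))
    (hN : N = P * blk Z (· ∈ T) (· ∈ T) * P) :
    SC (lap w) T * N * SC (lap w) T = SC (lap w) T ∧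
    N * SC (lap w) T * N = N ∧
    (SC (lap w) T * N)ᵀ = SC (lap w) T * N ∧
    (N * SC (lap w) T)ᵀ = N * SC (lap w) T := by
  have hD : IsUnit (blk (lap w) (· ∉ T) (· ∉ T)).det := (isUnit_iff_isUnit_det _).mp hSS.isUnit
  subst hP hN
  exact isMoorePenroseInverse_centeringMatrix_mul_mul (SC_transpose T (lap_transpose hw_symm))
    (SC_mulVec_restrict_eq_zero hD (lap_mulVec_const hw_diag 1))
    (fun _ => eq_of_SC_lap_mulVec_eq_zero hw_symm hw_nonneg hw_diag hconn hD)
    (SC_mul_blk_mul_SC hD hZ1)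

theorem schur_complement_pseudoinverse_formula [Fintype V] [DecidableEq V]
    (w : V → V → ℝ) (hw_symm : ∀ u v, w u v = w v u) (hw_nonneg : ∀ u v, 0 ≤ w u v)
    (hw_diag : ∀ u, w u u = 0)
    (hconn : (SimpleGraph.fromRel fun u v => 0 < w u v).Connected)
    (T : Set V) [DecidablePred (· ∈ T)] (hT_ne : T.Nonempty) (hT_proper : T ≠ Set.univ)
    (hSS : (blk (lap w) (fun v => v ∉ T) (fun v => v ∉ T)).PosDef)
    (Z : Matrix V V ℝ)
    (hZ1 : lap w * Z * lap w = lap w) (hZ2 : Z * lap w * Z = Z)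
    (hZ3 : (lap w * Z)ᵀ = lap w * Z) (hZ4 : (Z * lap w)ᵀ = Z * lap w)
    (P N : Matrix {v // v ∈ T} {v // v ∈ T} ℝ)
    (hP : P = 1 - ((Fintype.card {v // v ∈ T} : ℝ))⁻¹ • Matrix.of fun _ _ => (1 : ℝ))
    (hN : N = P * blk Z (· ∈ T) (· ∈ T) * P) :
    SC (lap w) T * N * SC (lap w) T = SC (lap w) T ∧
    N * SC (lap w) T * N = N ∧
    (SC (lap w) T * N)ᵀ = SC (lap w) T * N ∧
    (N * SC (lap w) T)ᵀ = N * SC (lap w) T :=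
  schur_complement_pseudoinverse_formula_general w hw_symm hw_nonneg hw_diag hconn T hSS Z hZ1 P N
    hP hN
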